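/- arXiv:1606.00274 — 5 statements merged into one kernel-verified Lean document; each statement's English description precedes it below -/
import Mathlib

section
/- Let X be a real Hilbert space, C ⊆ X an open convex set, f : C → ℝ Fréchet-differentiable on C, and 0 ≤ γ ≤ 1. Then f is γ-quasiconvex on C if and only if for all x₁, x₂ ∈ C the implication holds: f(x₁) ≤ γ f(x₂) implies ⟨∇f(x₂), x₂ − x₁⟩ ≥ 0. -/
/-!
Restrict `f` to the segment `t ↦ x₂ + t • (x₁ - x₂)`. If `f` is `γ`-quasiconvex and
`f x₁ ≤ γ f x₂`, then `x₂` is a maximum of `f` on the open segment towards `x₁`, so the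
directional derivative `⟪∇f x₂, x₁ - x₂⟫` is nonpositive. Conversely, under the gradient
condition the restriction `g` can only decrease at points where it exceeds `g 0` (there
`f x₁ ≤ γ f x₂ ≤ γ g t` because `γ ≥ 0`), so by the mean value theorem, applied beyond the
last point of `[0, λ]` where `g ≤ g 0`, it never rises above `g 0`.
-/

open scoped RealInnerProductSpace
open Set AffineMap

theorem image_le_image_left_of_hasDerivAt_nonpos_of_gt {g g' : ℝ → ℝ} {a b : ℝ} (hab : a ≤ b)
    (hcont : ContinuousOn g (Icc a b)) (hderiv : ∀ t ∈ Ioo a b, HasDerivAt g (g' t) t)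
    (hnonpos : ∀ t ∈ Ioo a b, g a < g t → g' t ≤ 0) : g b ≤ g a := by
  set S := Icc a b ∩ g ⁻¹' Iic (g a)
  have hS : IsCompact S :=
    isCompact_Icc.of_isClosed_subset
      (hcont.preimage_isClosed_of_isClosed isClosed_Icc isClosed_Iic) inter_subset_left
  obtain ⟨t₀, ⟨⟨ht₀a, ht₀b⟩, ht₀⟩, hlast⟩ :=
    hS.exists_isGreatest ⟨a, left_mem_Icc.2 hab, le_refl (g a)⟩
  rcases ht₀b.eq_or_lt with rfl | ht₀b
  · exact ht₀
  obtain ⟨c, hc, hslope⟩ := exists_hasDerivAt_eq_slope g g' ht₀b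
    (hcont.mono (Icc_subset_Icc_left ht₀a))
    (fun t ht => hderiv t ⟨ht₀a.trans_lt ht.1, ht.2⟩)
  have hc_above : g a < g c := by
    by_contra! hle
    exact hc.1.not_ge (hlast ⟨⟨ht₀a.trans hc.1.le, hc.2.le⟩, hle⟩)
  have hdiff : (g b - g t₀) / (b - t₀) ≤ 0 :=
    hslope ▸ hnonpos c ⟨ht₀a.trans_lt hc.1, hc.2⟩ hc_above
  rw [div_le_iff₀ (sub_pos.2 ht₀b), zero_mul, sub_nonpos] at hdiff
  exact hdiff.trans ht₀

section Gradient

variable {X : Type*} [NormedAddCommGroup X] [InnerProductSpace ℝ X] [CompleteSpace X]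
  {f : X → ℝ} {g x y : X}

theorem HasGradientAt.hasDerivAt_comp_lineMap {t : ℝ} (hf : HasGradientAt f g (lineMap x y t)) :
    HasDerivAt (fun s => f (lineMap x y s)) ⟪g, y - x⟫ t := by
  have hline : HasDerivAt (fun s : ℝ => lineMap x y s) (y - x) t := hasDerivAt_lineMap
  simpa [InnerProductSpace.toDual_apply_apply, Function.comp_def] using
    hf.hasFDerivAt.comp_hasDerivAt t hline

theorem HasGradientAt.inner_sub_nonpos_of_le_on_openSegment (hf : HasGradientAt f g x)
    (hle : ∀ z ∈ openSegment ℝ x y, f z ≤ f x) : ⟪g, y - x⟫ ≤ 0 := by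
  have hmax : IsLocalMaxOn f (openSegment ℝ x y) x :=
    Filter.eventually_of_mem self_mem_nhdsWithin hle
  simpa [InnerProductSpace.toDual_apply_apply] using
    hmax.hasFDerivWithinAt_nonpos hf.hasFDerivAt.hasFDerivWithinAt
      (sub_mem_posTangentConeAt_of_openSegment_subset subset_rfl)

end Gradient

theorem gamma_quasiconvex_iff_gradient_condition_general
    {X : Type*} [NormedAddCommGroup X] [InnerProductSpace ℝ X] [CompleteSpace X]
    (C : Set X) (hCconv : Convex ℝ C)
    (f : X → ℝ) (f' : X → X) (hf : ∀ x ∈ C, HasGradientAt f (f' x) x)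
    (γ : ℝ) (hγ0 : 0 ≤ γ) :
    (∀ x₁ ∈ C, ∀ x₂ ∈ C, ∀ lam : ℝ, 0 < lam → lam < 1 →
        f x₁ ≤ γ * f x₂ → f (lam • x₁ + (1 - lam) • x₂) ≤ f x₂) ↔
    (∀ x₁ ∈ C, ∀ x₂ ∈ C, f x₁ ≤ γ * f x₂ → ⟪f' x₂, x₂ - x₁⟫ ≥ 0) := by
  constructor
  · intro hq x₁ h₁ x₂ h₂ hle
    have hdir := (hf x₂ h₂).inner_sub_nonpos_of_le_on_openSegment (y := x₁) <| by
      rintro _ ⟨a, b, ha, hb, hab, rfl⟩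
      simpa [← eq_sub_of_add_eq hab, add_comm] using hq x₁ h₁ x₂ h₂ b hb (by linarith) hle
    rw [← neg_sub, inner_neg_right] at hdir
    linarith
  · intro hgc x₁ h₁ x₂ h₂ lam hlam0 hlam1 hle
    have hmem : ∀ t ∈ Icc (0 : ℝ) lam, lineMap x₂ x₁ t ∈ C := fun t ht =>
      hCconv.lineMap_mem h₂ h₁ ⟨ht.1, ht.2.trans hlam1.le⟩
    have hderiv : ∀ t ∈ Icc (0 : ℝ) lam, HasDerivAt (fun s => f (lineMap x₂ x₁ s))
        ⟪f' (lineMap x₂ x₁ t), x₁ - x₂⟫ t := fun t ht =>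
      (hf _ (hmem t ht)).hasDerivAt_comp_lineMap
    have hdescent : ∀ t ∈ Ioo (0 : ℝ) lam, f (lineMap x₂ x₁ (0 : ℝ)) < f (lineMap x₂ x₁ t) →
        ⟪f' (lineMap x₂ x₁ t), x₁ - x₂⟫ ≤ 0 := by
      intro t ht habove
      have hle' : f x₁ ≤ γ * f (lineMap x₂ x₁ t) :=
        hle.trans (mul_le_mul_of_nonneg_left (by simpa using habove.le) hγ0)
      have hinner := hgc x₁ h₁ _ (hmem t (Ioo_subset_Icc_self ht)) hle'
      rw [← vsub_eq_sub, lineMap_vsub_right, vsub_eq_sub, inner_smul_right, ← neg_sub x₁,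
        inner_neg_right] at hinner
      nlinarith [ht.2]
    have key := image_le_image_left_of_hasDerivAt_nonpos_of_gt hlam0.le
      (fun t ht => (hderiv t ht).continuousAt.continuousWithinAt)
      (fun t ht => hderiv t (Ioo_subset_Icc_self ht)) hdescent
    simpa [lineMap_apply_module, add_comm] using key

/-- For a Fréchet-differentiable functional `f` on an open convex set `C`
in a real Hilbert space and `0 ≤ γ ≤ 1`, `f` is `γ`-quasiconvex on `C` iff
`f x₁ ≤ γ f x₂` implies `⟪∇f x₂, x₂ - x₁⟫ ≥ 0` for all `x₁, x₂ ∈ C`. -/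
theorem gamma_quasiconvex_iff_gradient_condition
    {X : Type*} [NormedAddCommGroup X] [InnerProductSpace ℝ X] [CompleteSpace X]
    (C : Set X) (hCopen : IsOpen C) (hCconv : Convex ℝ C)
    (f : X → ℝ) (f' : X → X) (hf : ∀ x ∈ C, HasGradientAt f (f' x) x)
    (γ : ℝ) (hγ0 : 0 ≤ γ) (hγ1 : γ ≤ 1) :
    (∀ x₁ ∈ C, ∀ x₂ ∈ C, ∀ lam : ℝ, 0 < lam → lam < 1 →
        f x₁ ≤ γ * f x₂ → f (lam • x₁ + (1 - lam) • x₂) ≤ f x₂) ↔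
    (∀ x₁ ∈ C, ∀ x₂ ∈ C, f x₁ ≤ γ * f x₂ → ⟪f' x₂, x₂ - x₁⟫ ≥ 0) :=
  gamma_quasiconvex_iff_gradient_condition_general C hCconv f f' hf γ hγ0
end

section
/- Let X, Y be real Hilbert spaces, ρ > 0, x* ∈ X, B_ρ(x*) the ball of radius ρ around x*, F : B_ρ(x*) → Y Fréchet-differentiable, and η ∈ [0,1]. Then the weak tangential cone condition ⟨F(x) − F(x*) − F′(x)(x − x*), F(x) − F(x*)⟩ ≤ η‖F(x) − F(x*)‖² for all x ∈ B_ρ(x*) holds if and only if for every x ∈ B_ρ(x*) the map t ↦ t^{−2(1−η)} · J_LS(x* + t(x − x*)) is monotonically increasing on (0,1], where J_LS(x) = ½‖F(x) − F(x*)‖². -/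
/-!
Write `z t = x* + t (x - x*)`, `r t = F (z t) - F x*` and `a = -2 (1 - η)`. The chain rule gives
`d/dt (t ^ a * ½‖r t‖²) = t ^ (a - 1) * (η ‖r t‖² - ⟪r t - F' (z t) (z t - x*), r t⟫)`,
so the weak tangential cone condition at `z t` says exactly that this derivative is nonnegative
at `t`. On the whole ball it therefore gives monotonicity on `(0, 1]` by the mean value theorem;
conversely, monotonicity makes the derivative at `t = 1` nonnegative, which is the condition at `x`.
-/

open scoped RealInnerProductSpace
open Metric Set

lemma Convex.monotoneOn_of_hasDerivAt_nonneg {D : Set ℝ} (hD : Convex ℝ D) {f f' : ℝ → ℝ}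
    (hf : ∀ t ∈ D, HasDerivAt f (f' t) t) (hf' : ∀ t ∈ D, 0 ≤ f' t) : MonotoneOn f D :=
  monotoneOn_of_hasDerivWithinAt_nonneg hD (fun t ht ↦ (hf t ht).continuousAt.continuousWithinAt)
    (fun t ht ↦ (hf t (interior_subset ht)).hasDerivWithinAt)
    fun t ht ↦ hf' t (interior_subset ht)

lemma HasDerivAt.nonneg_of_monotoneOn_Ioc {a b t g' : ℝ} {g : ℝ → ℝ} (ht : t ∈ Ioc a b)
    (hg' : HasDerivAt g g' t) (hg : MonotoneOn g (Ioc a b)) : 0 ≤ g' :=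
  hg'.hasDerivWithinAt.nonneg_of_monotoneOn
    (uniqueDiffWithinAt_iff_accPt.mp (uniqueDiffOn_Ioc a b t ht)) hg

section Segment

variable {X Y : Type*} [NormedAddCommGroup X] [NormedSpace ℝ X]
  [NormedAddCommGroup Y] [InnerProductSpace ℝ Y]
  {F : X → Y} {L : X →L[ℝ] Y} {xs v : X} {t : ℝ}

lemma hasDerivAt_half_norm_sq_sub_comp_line (c : Y) (hF : HasFDerivAt F L (xs + t • v)) :
    HasDerivAt (fun s : ℝ ↦ 1 / 2 * ‖F (xs + s • v) - c‖ ^ 2)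
      ⟪F (xs + t • v) - c, L v⟫ t := by
  have hline : HasDerivAt (fun s : ℝ ↦ xs + s • v) v t := by
    simpa using ((hasDerivAt_id t).smul_const v).const_add xs
  have := (((hF.comp_hasDerivAt t hline).sub_const c).norm_sq).const_mul (1 / 2 : ℝ)
  exact this.congr_deriv (by rw [Function.comp_apply]; ring)

lemma hasDerivAt_rpow_mul_half_norm_sq_sub (η : ℝ) (ht : 0 < t)
    (hF : HasFDerivAt F L (xs + t • v)) :
    HasDerivAt (fun s : ℝ ↦ s ^ (-(2 * (1 - η))) * (1 / 2 * ‖F (xs + s • v) - F xs‖ ^ 2))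
      (t ^ (-(2 * (1 - η)) - 1) * (η * ‖F (xs + t • v) - F xs‖ ^ 2 -
        ⟪F (xs + t • v) - F xs - L (t • v), F (xs + t • v) - F xs⟫)) t := by
  refine ((Real.hasDerivAt_rpow_const (Or.inl ht.ne')).mul
    (hasDerivAt_half_norm_sq_sub_comp_line (F xs) hF)).congr_deriv ?_
  set r := F (xs + t • v) - F xs
  rw [map_smul, inner_sub_left r, real_inner_smul_left, real_inner_self_eq_norm_sq,
    real_inner_comm, Real.rpow_sub_one ht.ne']
  field_simp
  ring

end Segment

theorem weak_tangential_cone_iff_monotone_general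
    {X Y : Type*} [NormedAddCommGroup X] [InnerProductSpace ℝ X]
    [NormedAddCommGroup Y] [InnerProductSpace ℝ Y]
    (xs : X) (ρ : ℝ)
    (F : X → Y) (F' : X → X →L[ℝ] Y)
    (hF : ∀ x ∈ closedBall xs ρ, HasFDerivAt F (F' x) x)
    (η : ℝ) :
    (∀ x ∈ closedBall xs ρ,
        ⟪F x - F xs - F' x (x - xs), F x - F xs⟫ ≤ η * ‖F x - F xs‖ ^ 2) ↔
    (∀ x ∈ closedBall xs ρ,
        MonotoneOn
          (fun t : ℝ =>
            t ^ (-(2 * (1 - η))) * ((1 : ℝ) / 2 * ‖F (xs + t • (x - xs)) - F xs‖ ^ 2))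
          (Set.Ioc (0 : ℝ) 1)) := by
  have hsegment : ∀ x ∈ closedBall xs ρ, ∀ t ∈ Ioc (0 : ℝ) 1,
      xs + t • (x - xs) ∈ closedBall xs ρ := fun x hx t ht ↦
    (convex_closedBall xs ρ).add_smul_sub_mem (mem_closedBall_self (dist_nonneg.trans hx)) hx
      (Ioc_subset_Icc_self ht)
  have hderiv : ∀ x ∈ closedBall xs ρ, ∀ t ∈ Ioc (0 : ℝ) 1, _ := fun x hx t ht ↦
    hasDerivAt_rpow_mul_half_norm_sq_sub η ht.1 (hF _ (hsegment x hx t ht))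
  constructor
  · intro hcone x hx
    refine (convex_Ioc 0 1).monotoneOn_of_hasDerivAt_nonneg (hderiv x hx) fun t ht ↦ ?_
    have hcone_t := hcone _ (hsegment x hx t ht)
    rw [add_sub_cancel_left] at hcone_t
    exact mul_nonneg (Real.rpow_nonneg ht.1.le _) (sub_nonneg.2 hcone_t)
  · intro hmono x hx
    have h1 : (1 : ℝ) ∈ Ioc 0 1 := right_mem_Ioc.2 one_pos
    simpa using (hderiv x hx 1 h1).nonneg_of_monotoneOn_Ioc h1 (hmono x hx)

/-- The weak tangential cone condition holds with constant `η ∈ [0,1]`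
iff for every `x` in the ball the map `t ↦ t^(-2(1-η)) · J_LS(x* + t(x - x*))` is
monotonically increasing on `(0,1]`, where `J_LS(x) = ½‖F x - F x*‖²`. -/
theorem weak_tangential_cone_iff_monotone
    {X Y : Type*} [NormedAddCommGroup X] [InnerProductSpace ℝ X] [CompleteSpace X]
    [NormedAddCommGroup Y] [InnerProductSpace ℝ Y] [CompleteSpace Y]
    (xs : X) (ρ : ℝ) (hρ : 0 < ρ)
    (F : X → Y) (F' : X → X →L[ℝ] Y)
    (hF : ∀ x ∈ closedBall xs ρ, HasFDerivAt F (F' x) x)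
    (η : ℝ) (hη0 : 0 ≤ η) (hη1 : η ≤ 1) :
    (∀ x ∈ closedBall xs ρ,
        ⟪F x - F xs - F' x (x - xs), F x - F xs⟫ ≤ η * ‖F x - F xs‖ ^ 2) ↔
    (∀ x ∈ closedBall xs ρ,
        MonotoneOn
          (fun t : ℝ =>
            t ^ (-(2 * (1 - η))) * ((1 : ℝ) / 2 * ‖F (xs + t • (x - xs)) - F xs‖ ^ 2))
          (Set.Ioc (0 : ℝ) 1)) :=
  weak_tangential_cone_iff_monotone_general xs ρ F F' hF η
end

section
/- Let X, Y be real Hilbert spaces, F : B_ρ(x*) → Y Fréchet-differentiable with sup_{x ∈ B_ρ(x*)} ‖F′(x)*‖ = C < ∞, and suppose the strong tangential cone condition ‖F(x) − F(x̃) − F′(x)(x − x̃)‖ ≤ η‖F(x) − F(x̃)‖ holds for all x, x̃ ∈ B_ρ(x*) with some η < 1. Then the least-squares functional J_LS(x) = ½‖F(x) − F(x*)‖² satisfies condition NC(γ,β) for every γ with 0 ≤ γ < (√(1−η²)/(1+√(1−η²)))² and β = −[(1−η²)(1−√γ)² − γ]/(2C²) < 0: that is, for all x₁, x₂ ∈ B_ρ(x*),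 J_LS(x₁) ≤ γ J_LS(x₂) implies ⟨∇J_LS(x₂), x₂ − x₁⟩ ≥ −β‖∇J_LS(x₂)‖². -/
open scoped RealInnerProductSpace
open Metric

/-!
Write `r = F x - F x*` for the residual and `A = F'(x₂)`. The tangential cone condition says that
`A (x₂ - x₁)` is within relative distance `η` of `r₂ - r₁`, so `⟪r₂, A (x₂ - x₁)⟫` is, up to an error
`η ‖r₂‖ ‖r₂ - r₁‖`, the polarization term `(‖r₂‖² + ‖r₂ - r₁‖² - ‖r₁‖²) / 2`; completing the square
in `‖r₂ - r₁‖` leaves `((1 - η²) ‖r₂‖² - ‖r₁‖²) / 2 ≥ (1 - η² - γ) ‖r₂‖² / 2`. Since the gradient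
`A* r₂` has norm at most `C ‖r₂‖`, this dominates `c ‖A* r₂‖² / (2 C²)` for any constant
`c ≤ 1 - η² - γ`, and `c = (1 - η²)(1 - √γ)² - γ` is such a constant, positive exactly when `γ`
lies below the threshold.
-/

lemma lt_mul_one_sub_of_sq_lt_sq_div {s t : ℝ} (hs : 0 ≤ s) (ht : 0 ≤ t)
    (h : t ^ 2 < (s / (1 + s)) ^ 2) : t < s * (1 - t) := by
  have hlt : t < s / (1 + s) := (pow_lt_pow_iff_left₀ ht (by positivity) two_ne_zero).mp h
  rw [lt_div_iff₀ (by positivity)] at hlt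
  linarith

lemma one_sub_sq_mul_one_sub_sqrt_sq_sub_pos_and_le {η γ : ℝ} (hγ0 : 0 ≤ γ)
    (hγ : γ < (√(1 - η ^ 2) / (1 + √(1 - η ^ 2))) ^ 2) :
    0 < (1 - η ^ 2) * (1 - √γ) ^ 2 - γ ∧ (1 - η ^ 2) * (1 - √γ) ^ 2 - γ ≤ 1 - η ^ 2 - γ := by
  set s := √(1 - η ^ 2)
  set t := √γ
  have hs : 0 ≤ s := Real.sqrt_nonneg _
  have ht : 0 ≤ t := Real.sqrt_nonneg _
  have ht2 : t ^ 2 = γ := Real.sq_sqrt hγ0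
  have hts : t < s * (1 - t) := lt_mul_one_sub_of_sq_lt_sq_div hs ht (ht2 ▸ hγ)
  have ht1 : t < 1 := by nlinarith
  have hη : 0 < 1 - η ^ 2 := Real.sqrt_pos.mp (pos_of_mul_pos_left (ht.trans_lt hts) (by linarith))
  have hs2 : s ^ 2 = 1 - η ^ 2 := Real.sq_sqrt hη.le
  constructor
  · have hsq : t ^ 2 < (s * (1 - t)) ^ 2 := pow_lt_pow_left₀ hts ht two_ne_zero
    rw [mul_pow, hs2, ht2] at hsq
    linarith
  · have hle : (1 - η ^ 2) * (1 - t) ^ 2 ≤ 1 - η ^ 2 :=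
      mul_le_of_le_one_right hη.le (by nlinarith)
    linarith

lemma two_mul_real_inner_ge_of_norm_sub_sub_le {Y : Type*} [NormedAddCommGroup Y]
    [InnerProductSpace ℝ Y] {y y₁ y₂ v : Y} {η : ℝ} (hv : ‖y₂ - y₁ - v‖ ≤ η * ‖y₂ - y₁‖) :
    (1 - η ^ 2) * ‖y₂ - y‖ ^ 2 - ‖y₁ - y‖ ^ 2 ≤ 2 * ⟪y₂ - y, v⟫ := by
  set u := y₂ - y₁
  have hr₁ : y₁ - y = (y₂ - y) - u := by simp only [u]; abel
  have hsplit : ⟪y₂ - y, v⟫ = ⟪y₂ - y, u⟫ - ⟪y₂ - y, u - v⟫ := by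
    rw [← inner_sub_right, sub_sub_cancel]
  have hpol : ‖y₁ - y‖ ^ 2 = ‖y₂ - y‖ ^ 2 - 2 * ⟪y₂ - y, u⟫ + ‖u‖ ^ 2 := by
    rw [hr₁, norm_sub_sq_real]
  have hcs : ⟪y₂ - y, u - v⟫ ≤ ‖y₂ - y‖ * (η * ‖u‖) :=
    (real_inner_le_norm _ _).trans (mul_le_mul_of_nonneg_left hv (norm_nonneg _))
  nlinarith [sq_nonneg (‖u‖ - η * ‖y₂ - y‖)]

theorem strong_tangential_cone_implies_NC_general
    {X Y : Type*} [NormedAddCommGroup X] [InnerProductSpace ℝ X] [CompleteSpace X]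
    [NormedAddCommGroup Y] [InnerProductSpace ℝ Y] [CompleteSpace Y]
    (xs : X) (ρ : ℝ)
    (F : X → Y) (F' : X → X →L[ℝ] Y)
    (η : ℝ)
    (CC : ℝ) (hCC0 : 0 < CC)
    (hCC : ∀ x ∈ closedBall xs ρ, ‖ContinuousLinearMap.adjoint (F' x)‖ ≤ CC)
    (htcc : ∀ x ∈ closedBall xs ρ, ∀ xt ∈ closedBall xs ρ,
      ‖F x - F xt - F' x (x - xt)‖ ≤ η * ‖F x - F xt‖)
    (γ : ℝ) (hγ0 : 0 ≤ γ)
    (hγ : γ < (Real.sqrt (1 - η ^ 2) / (1 + Real.sqrt (1 - η ^ 2))) ^ 2) :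
    (-(((1 - η ^ 2) * (1 - Real.sqrt γ) ^ 2 - γ) / (2 * CC ^ 2)) < 0) ∧
    (∀ x₁ ∈ closedBall xs ρ, ∀ x₂ ∈ closedBall xs ρ,
      (1 : ℝ) / 2 * ‖F x₁ - F xs‖ ^ 2 ≤ γ * ((1 : ℝ) / 2 * ‖F x₂ - F xs‖ ^ 2) →
      ⟪ContinuousLinearMap.adjoint (F' x₂) (F x₂ - F xs), x₂ - x₁⟫ ≥
        -(-(((1 - η ^ 2) * (1 - Real.sqrt γ) ^ 2 - γ) / (2 * CC ^ 2))) *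
          ‖ContinuousLinearMap.adjoint (F' x₂) (F x₂ - F xs)‖ ^ 2) := by
  obtain ⟨hc, hcle⟩ := one_sub_sq_mul_one_sub_sqrt_sq_sub_pos_and_le hγ0 hγ
  set c := (1 - η ^ 2) * (1 - √γ) ^ 2 - γ
  refine ⟨by rw [neg_lt_zero]; positivity, fun x₁ hx₁ x₂ hx₂ hJ => ?_⟩
  set r := F x₂ - F xs
  set g := ContinuousLinearMap.adjoint (F' x₂) r
  have hgrad : ‖g‖ ≤ CC * ‖r‖ :=
    ((F' x₂).adjoint.le_opNorm r).trans (mul_le_mul_of_nonneg_right (hCC x₂ hx₂) (norm_nonneg _))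
  have hdescent : (1 - η ^ 2) * ‖r‖ ^ 2 - ‖F x₁ - F xs‖ ^ 2 ≤ 2 * ⟪g, x₂ - x₁⟫ := by
    rw [ContinuousLinearMap.adjoint_inner_left]
    exact two_mul_real_inner_ge_of_norm_sub_sub_le (htcc x₂ hx₂ x₁ hx₁)
  rw [neg_neg, ge_iff_le]
  calc c / (2 * CC ^ 2) * ‖g‖ ^ 2 ≤ c / (2 * CC ^ 2) * (CC * ‖r‖) ^ 2 := by gcongr
    _ = c / 2 * ‖r‖ ^ 2 := by field_simp
    _ ≤ (1 - η ^ 2 - γ) / 2 * ‖r‖ ^ 2 := by gcongr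
    _ ≤ ⟪g, x₂ - x₁⟫ := by linarith

/-- Under the strong tangential cone condition with `η < 1` and with
`C` bounding `‖F'(x)*‖` on the ball, the least-squares functional `J_LS(x) = ½‖F x - F x*‖²`
satisfies the condition NC(γ,β) for every `0 ≤ γ < (√(1-η²)/(1+√(1-η²)))²` with
`β = -[(1-η²)(1-√γ)² - γ]/(2C²) < 0`, where `∇J_LS(x) = F'(x)* (F x - F x*)`. -/
theorem strong_tangential_cone_implies_NC
    {X Y : Type*} [NormedAddCommGroup X] [InnerProductSpace ℝ X] [CompleteSpace X]
    [NormedAddCommGroup Y] [InnerProductSpace ℝ Y] [CompleteSpace Y]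
    (xs : X) (ρ : ℝ) (hρ : 0 < ρ)
    (F : X → Y) (F' : X → X →L[ℝ] Y)
    (hF : ∀ x ∈ closedBall xs ρ, HasFDerivAt F (F' x) x)
    (η : ℝ) (hη1 : η < 1)
    (CC : ℝ) (hCC0 : 0 < CC)
    (hCC : ∀ x ∈ closedBall xs ρ, ‖ContinuousLinearMap.adjoint (F' x)‖ ≤ CC)
    (htcc : ∀ x ∈ closedBall xs ρ, ∀ xt ∈ closedBall xs ρ,
      ‖F x - F xt - F' x (x - xt)‖ ≤ η * ‖F x - F xt‖)
    (γ : ℝ) (hγ0 : 0 ≤ γ)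
    (hγ : γ < (Real.sqrt (1 - η ^ 2) / (1 + Real.sqrt (1 - η ^ 2))) ^ 2) :
    (-(((1 - η ^ 2) * (1 - Real.sqrt γ) ^ 2 - γ) / (2 * CC ^ 2)) < 0) ∧
    (∀ x₁ ∈ closedBall xs ρ, ∀ x₂ ∈ closedBall xs ρ,
      (1 : ℝ) / 2 * ‖F x₁ - F xs‖ ^ 2 ≤ γ * ((1 : ℝ) / 2 * ‖F x₂ - F xs‖ ^ 2) →
      ⟪ContinuousLinearMap.adjoint (F' x₂) (F x₂ - F xs), x₂ - x₁⟫ ≥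
        -(-(((1 - η ^ 2) * (1 - Real.sqrt γ) ^ 2 - γ) / (2 * CC ^ 2))) *
          ‖ContinuousLinearMap.adjoint (F' x₂) (F x₂ - F xs)‖ ^ 2) :=
  strong_tangential_cone_implies_NC_general xs ρ F F' η CC hCC0 hCC htcc γ hγ0 hγ
end

section
/- Let X, Y be real Hilbert spaces, F : B_ρ(x*) → Y Fréchet-differentiable, and suppose the strong tangential cone condition ‖F(x) − F(x̃) − F′(x)(x − x̃)‖ ≤ η‖F(x) − F(x̃)‖ holds for all x, x̃ ∈ B_ρ(x*) with some η < 1. Then for every γ ∈ (0,1] the least-squares functional J_LS(x) = ½‖F(x) − F(x*)‖² is γ-balanced around x*; in fact τ = (1−η)γ/(1+η) satisfies J_LS(x* − τ z) ≤ γ J_LS(x* + z) for all z with x* + z ∈ B_ρ(x*). -/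
open Metric

/-- A functional `J` is `γ`-balanced around `x*` (Definition 2 of the paper): there is a
`ρ₀ < ρ` such that for every sequence `z n` with `ρ₀ ≤ ‖z n‖ ≤ ρ` there are `τ > 0` and
`n₀` with `J(x* - τ z n) ≤ γ J(x* + z n)` for all `n ≥ n₀`. -/
def GammaBalanced {X : Type*} [NormedAddCommGroup X] [InnerProductSpace ℝ X]
    (J : X → ℝ) (xs : X) (ρ γ : ℝ) : Prop :=
  ∃ ρ₀ < ρ, ∀ z : ℕ → X, (∀ n, ρ₀ ≤ ‖z n‖ ∧ ‖z n‖ ≤ ρ) →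
    ∃ τ > (0 : ℝ), ∃ n₀ : ℕ, ∀ n ≥ n₀, J (xs - τ • z n) ≤ γ * J (xs + z n)

/-- Under the strong tangential cone condition with `η ∈ (0,1)`, for every
`γ ∈ (0,1]` the least-squares functional `J_LS(x) = ½‖F x - F x*‖²` is `γ`-balanced around
`x*`; in fact `τ = (1-η)γ/(1+η)` satisfies `J_LS(x* - τ z) ≤ γ J_LS(x* + z)` whenever
`x* + z ∈ B_ρ(x*)`. -/
theorem strong_tangential_cone_implies_balanced
    {X Y : Type*} [NormedAddCommGroup X] [InnerProductSpace ℝ X] [CompleteSpace X]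
    [NormedAddCommGroup Y] [InnerProductSpace ℝ Y] [CompleteSpace Y]
    (xs : X) (ρ : ℝ) (hρ : 0 < ρ)
    (F : X → Y) (F' : X → X →L[ℝ] Y)
    (hF : ∀ x ∈ closedBall xs ρ, HasFDerivAt F (F' x) x)
    (η : ℝ) (hη0 : 0 < η) (hη1 : η < 1)
    (htcc : ∀ x ∈ closedBall xs ρ, ∀ xt ∈ closedBall xs ρ,
      ‖F x - F xt - F' x (x - xt)‖ ≤ η * ‖F x - F xt‖) :
    ∀ γ : ℝ, 0 < γ → γ ≤ 1 →
      GammaBalanced (fun x => (1 : ℝ) / 2 * ‖F x - F xs‖ ^ 2) xs ρ γ ∧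
      (∀ z : X, xs + z ∈ closedBall xs ρ →
        (1 : ℝ) / 2 * ‖F (xs - ((1 - η) * γ / (1 + η)) • z) - F xs‖ ^ 2 ≤
          γ * ((1 : ℝ) / 2 * ‖F (xs + z) - F xs‖ ^ 2)) := by
  intro γ hγ0 hγ1
  have h1η : (0:ℝ) < 1 - η := by linarith
  have h1η' : (0:ℝ) < 1 + η := by linarith
  set τ : ℝ := (1 - η) * γ / (1 + η) with hτdef
  have hτpos : 0 < τ := div_pos (mul_pos h1η hγ0) h1η'
  have hτle1 : τ ≤ 1 := by
    rw [hτdef, div_le_one h1η']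
    nlinarith
  have key : ∀ z : X, xs + z ∈ closedBall xs ρ →
      (1:ℝ)/2 * ‖F (xs - τ • z) - F xs‖ ^ 2 ≤ γ * ((1:ℝ)/2 * ‖F (xs + z) - F xs‖ ^ 2) := by
    intro z hz
    have hzn : ‖z‖ ≤ ρ := by
      have := mem_closedBall.mp hz
      simpa [dist_eq_norm] using this
    have hm1 : xs ∈ closedBall xs ρ := mem_closedBall_self hρ.le
    have hm2 : xs - τ • z ∈ closedBall xs ρ := by
      rw [mem_closedBall, dist_eq_norm]
      have h : ‖xs - τ • z - xs‖ = τ * ‖z‖ := by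
        simp [norm_smul, abs_of_pos hτpos]
      rw [h]
      nlinarith [norm_nonneg z]
    set a := ‖F (xs + z) - F xs‖ with ha
    set b := ‖F (xs - τ • z) - F xs‖ with hb
    set c := ‖F' xs z‖ with hc
    have ha0 : 0 ≤ a := norm_nonneg _
    have hb0 : 0 ≤ b := norm_nonneg _
    -- first tcc: x = xs, xt = xs + z
    have h1 := htcc xs hm1 (xs + z) hz
    have e1 : xs - (xs + z) = -z := by abel
    rw [e1, map_neg] at h1
    have hca : c ≤ (1 + η) * a := by
      have tri : c ≤ ‖F xs - F (xs + z) - -(F' xs z)‖ + ‖F xs - F (xs + z)‖ := by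
        have : (F' xs z : Y) = (F xs - F (xs + z) - -(F' xs z)) - (F xs - F (xs + z)) := by
          abel
        calc c = ‖(F xs - F (xs + z) - -(F' xs z)) - (F xs - F (xs + z))‖ := by rw [hc, ← this]
          _ ≤ _ := norm_sub_le _ _
      have hrev : ‖F xs - F (xs + z)‖ = a := by rw [ha, norm_sub_rev]
      rw [hrev] at h1 tri
      linarith
    -- second tcc: x = xs, xt = xs - τ • z
    have h2 := htcc xs hm1 (xs - τ • z) hm2
    have e2 : xs - (xs - τ • z) = τ • z := by abel
    rw [e2, map_smul] at h2
    have hrev2 : ‖F xs - F (xs - τ • z)‖ = b := by rw [hb, norm_sub_rev]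
    rw [hrev2] at h2
    have hsm : ‖τ • F' xs z‖ = τ * c := by
      rw [hc]; simp [norm_smul, abs_of_pos hτpos]
    have hbc : b ≤ η * b + τ * c := by
      have tri : b ≤ ‖F xs - F (xs - τ • z) - τ • F' xs z‖ + ‖τ • F' xs z‖ := by
        have : (F (xs - τ • z) - F xs : Y) =
            -((F xs - F (xs - τ • z) - τ • F' xs z) + τ • F' xs z) := by abel
        calc b = ‖(F xs - F (xs - τ • z) - τ • F' xs z) + τ • F' xs z‖ := by
              rw [hb, this, norm_neg]
          _ ≤ _ := norm_add_le _ _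
      rw [hsm] at tri
      linarith
    have hba : b ≤ γ * a := by
      have h3 : (1 - η) * b ≤ τ * ((1 + η) * a) := by nlinarith
      have h4 : τ * (1 + η) = (1 - η) * γ := by
        rw [hτdef]; field_simp
      nlinarith
    nlinarith [sq_nonneg a, mul_le_mul hba hba hb0 (by nlinarith : (0:ℝ) ≤ γ * a)]
  constructor
  · refine ⟨ρ/2, by linarith, fun z hz => ⟨τ, hτpos, 0, fun n _ => ?_⟩⟩
    exact key (z n) (by
      rw [mem_closedBall, dist_eq_norm]
      simpa using (hz n).2)
  · exact key
end

section
/- Let X be a real Hilbert space and J : B_ρ(x*) → [0,∞) convex and satisfying the symmetry condition J(x* − z) ≤ C·J(x* + z) for all z with x* ± z ∈ B_ρ(x*), for some constant C > 0. Then J is γ-balanced around x* for every γ > 0. -/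
open Metric

/-- If `J : B_ρ(x*) → [0,∞)` (with `J(x*) = 0`, the standing assumption of
the paper) is convex on `B_ρ(x*)` and satisfies the symmetry condition
`J(x* - z) ≤ C·J(x* + z)` for all `z` with `x* ± z ∈ B_ρ(x*)`, then `J` is `γ`-balanced
around `x*` for every `γ > 0`. -/
theorem convex_symmetric_implies_balanced
    {X : Type*} [NormedAddCommGroup X] [InnerProductSpace ℝ X] [CompleteSpace X]
    (xs : X) (ρ : ℝ) (hρ : 0 < ρ)
    (J : X → ℝ) (hJnn : ∀ x ∈ closedBall xs ρ, 0 ≤ J x)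
    (hJxs : J xs = 0)
    (hJconv : ConvexOn ℝ (closedBall xs ρ) J)
    (Csym : ℝ) (hCsym : 0 < Csym)
    (hsym : ∀ z : X, xs + z ∈ closedBall xs ρ → J (xs - z) ≤ Csym * J (xs + z)) :
    ∀ γ : ℝ, 0 < γ → GammaBalanced J xs ρ γ := by
  intro γ hγ
  refine ⟨ρ / 2, by linarith, fun z hz => ?_⟩
  set τ : ℝ := min 1 (γ / Csym) with hτdef
  have hτpos : 0 < τ := lt_min one_pos (div_pos hγ hCsym)
  have hτle1 : τ ≤ 1 := min_le_left _ _
  have hτC : τ * Csym ≤ γ := by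
    have : τ ≤ γ / Csym := min_le_right _ _
    calc τ * Csym ≤ (γ / Csym) * Csym := by nlinarith
    _ = γ := div_mul_cancel₀ _ (ne_of_gt hCsym)
  refine ⟨τ, hτpos, 0, fun n _ => ?_⟩
  have hzn : ‖z n‖ ≤ ρ := (hz n).2
  have hplus : xs + z n ∈ closedBall xs ρ := by
    simpa [dist_eq_norm] using hzn
  have hminus : xs - z n ∈ closedBall xs ρ := by
    simpa [dist_eq_norm, norm_sub_rev] using hzn
  have hcenter : xs ∈ closedBall xs ρ := mem_closedBall_self hρ.le
  have hconv := hJconv.2 hcenter hminus (show (0:ℝ) ≤ 1 - τ by linarith)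
    hτpos.le (show (1 - τ) + τ = 1 by ring)
  have heq : (1 - τ) • xs + τ • (xs - z n) = xs - τ • z n := by
    rw [smul_sub]; module
  rw [heq, hJxs] at hconv
  simp only [smul_eq_mul] at hconv
  have h1 : J (xs - τ • z n) ≤ τ * J (xs - z n) := by linarith [hconv]
  have h2 : J (xs - z n) ≤ Csym * J (xs + z n) := hsym (z n) hplus
  have h3 : 0 ≤ J (xs + z n) := hJnn _ hplus
  calc J (xs - τ • z n) ≤ τ * (Csym * J (xs + z n)) := le_trans h1 (by nlinarith)
  _ = (τ * Csym) * J (xs + z n) := by ring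
  _ ≤ γ * J (xs + z n) := by nlinarith
end
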